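/- arXiv:2011.09620 — 3 statements merged into one kernel-verified Lean document; each statement's English description precedes it below -/
import Mathlib

section
/- On the closed interval [V_q⁺ − ε_q⁺/2, V_q⁺ + ε_q⁺/2], the function h(Δv) = q̄(Δv)·((V_q⁺ − ε_q⁺/2) − Δv)/ε_q⁺ (the middle droop segment of the Volt-Var curve) is Lipschitz continuous with Lipschitz constant C_q = (p̄/ε_p)/√(1/μ² − 1) + q_lim/ε_q⁺. -/
/-- The Volt-Watt control function. -/
noncomputable def voltWatt (pbar εp Vp : ℝ) (Δv : ℝ) : ℝ :=
  if Δv ≤ Vp - εp / 2 then pbar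
  else if Δv < Vp + εp / 2 then (pbar / εp) * ((Vp + εp / 2) - Δv)
  else 0

/-- The available reactive power function. -/
noncomputable def qBar (s qlim pbar εp Vp : ℝ) (Δv : ℝ) : ℝ :=
  min qlim (Real.sqrt (s ^ 2 - (voltWatt pbar εp Vp Δv) ^ 2))

/-!
The map `q̄` is `min q_lim ∘ (x ↦ √(s² - x²)) ∘ f_p`. The Volt-Watt curve `f_p` is `p̄ / ε_p` times
a clamped affine map, hence `(p̄ / ε_p)`-Lipschitz with values in `[0, p̄]`. On `[-p̄, p̄]` the radicand
`s² - x²` stays above `s² - p̄² > 0`, so `x ↦ √(s² - x²)` is Lipschitz there with constant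
`p̄ / √(s² - p̄²) = 1 / √(1 / μ² - 1)`, and `min q_lim` is `1`-Lipschitz. The droop factor
`((V_q⁺ - ε_q⁺ / 2) - Δv) / ε_q⁺` has slope `-1 / ε_q⁺` and modulus at most `1` on the interval, while
`0 ≤ q̄ ≤ q_lim`; the product rule `|a b - c d| ≤ |a - c| |b| + |c| |b - d|` gives `C_q`.
-/

open Set

section VoltWatt

variable {pbar εp : ℝ} (Vp : ℝ)

lemma voltWatt_eq_mul_projIcc (hε : 0 < εp) (x : ℝ) :
    voltWatt pbar εp Vp x = pbar / εp * projIcc 0 εp hε.le (Vp + εp / 2 - x) := by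
  unfold voltWatt
  split_ifs
  · rw [projIcc_of_right_le _ (by linarith)]
    field_simp
  · rw [projIcc_of_mem _ ⟨by linarith, by linarith⟩]
  · rw [projIcc_of_le_left _ (by linarith), Subtype.coe_mk, mul_zero]

lemma abs_voltWatt_le (hpbar : 0 ≤ pbar) (hε : 0 < εp) (x : ℝ) :
    |voltWatt pbar εp Vp x| ≤ pbar := by
  obtain ⟨hlo, hhi⟩ := (projIcc 0 εp hε.le (Vp + εp / 2 - x)).2
  rw [voltWatt_eq_mul_projIcc Vp hε, abs_of_nonneg (by positivity)]
  calc pbar / εp * _ ≤ pbar / εp * εp := by gcongr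
    _ = pbar := div_mul_cancel₀ pbar hε.ne'

lemma abs_voltWatt_sub_voltWatt_le (hpbar : 0 ≤ pbar) (hε : 0 < εp) (u w : ℝ) :
    |voltWatt pbar εp Vp u - voltWatt pbar εp Vp w| ≤ pbar / εp * |u - w| := by
  rw [voltWatt_eq_mul_projIcc Vp hε, voltWatt_eq_mul_projIcc Vp hε, ← mul_sub, abs_mul,
    abs_of_nonneg (by positivity)]
  refine mul_le_mul_of_nonneg_left ?_ (by positivity)
  calc _ ≤ |(Vp + εp / 2 - u) - (Vp + εp / 2 - w)| := abs_projIcc_sub_projIcc hε.le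
    _ = |u - w| := by rw [sub_sub_sub_cancel_left, abs_sub_comm]

end VoltWatt

lemma abs_sqrt_sub_sqrt_le {c x y : ℝ} (hc : 0 < c) (hx : c ≤ x) (hy : c ≤ y) :
    |√x - √y| ≤ |x - y| / (2 * √c) := by
  have hsum : 2 * √c ≤ √x + √y := by
    linarith [Real.sqrt_le_sqrt hx, Real.sqrt_le_sqrt hy]
  have hprod : (√x - √y) * (√x + √y) = x - y := by
    rw [mul_comm, ← sq_sub_sq, Real.sq_sqrt (hc.le.trans hx), Real.sq_sqrt (hc.le.trans hy)]
  have hc' : 0 < 2 * √c := by positivity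
  rw [le_div_iff₀ hc', ← hprod, abs_mul, abs_of_pos (hc'.trans_le hsum)]
  gcongr

lemma abs_sqrt_sq_sub_sq_sub_le {s m a b : ℝ} (hm : 0 ≤ m) (hms : m < s) (ha : |a| ≤ m)
    (hb : |b| ≤ m) :
    |√(s ^ 2 - a ^ 2) - √(s ^ 2 - b ^ 2)| ≤ m / √(s ^ 2 - m ^ 2) * |a - b| := by
  have hgap : 0 < s ^ 2 - m ^ 2 := by nlinarith
  have hbound (c : ℝ) (hc : |c| ≤ m) : s ^ 2 - m ^ 2 ≤ s ^ 2 - c ^ 2 := by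
    nlinarith [sq_abs c, abs_nonneg c]
  have hdiff : |(s ^ 2 - a ^ 2) - (s ^ 2 - b ^ 2)| ≤ 2 * m * |a - b| := by
    rw [show (s ^ 2 - a ^ 2) - (s ^ 2 - b ^ 2) = (b + a) * (b - a) by ring, abs_mul,
      abs_sub_comm b]
    gcongr
    linarith [abs_add_le b a]
  calc _ ≤ |(s ^ 2 - a ^ 2) - (s ^ 2 - b ^ 2)| / (2 * √(s ^ 2 - m ^ 2)) :=
        abs_sqrt_sub_sqrt_le hgap (hbound a ha) (hbound b hb)
    _ ≤ 2 * m * |a - b| / (2 * √(s ^ 2 - m ^ 2)) := by gcongr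
    _ = m / √(s ^ 2 - m ^ 2) * |a - b| := by field_simp

lemma mul_div_sqrt_sq_sub_mul_sq {s μ : ℝ} (hs : 0 < s) (hμ : 0 < μ) :
    μ * s / √(s ^ 2 - (μ * s) ^ 2) = 1 / √(1 / μ ^ 2 - 1) := by
  have hratio : 1 / μ ^ 2 - 1 = (s ^ 2 - (μ * s) ^ 2) / (μ * s) ^ 2 := by
    field_simp
  rw [hratio, Real.sqrt_div' _ (by positivity), Real.sqrt_sq (by positivity), one_div_div]

lemma abs_qBar_le {s qlim pbar εp Vp : ℝ} (hq : 0 ≤ qlim) (x : ℝ) :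
    |qBar s qlim pbar εp Vp x| ≤ qlim := by
  unfold qBar
  rw [abs_of_nonneg (le_min hq (Real.sqrt_nonneg _))]
  exact min_le_left _ _

lemma abs_qBar_sub_qBar_le {s μ εp Vp qlim pbar : ℝ} (hs : 0 < s) (hμ0 : 0 < μ) (hμ1 : μ < 1)
    (hε : 0 < εp) (hpbar : pbar = μ * s) (u w : ℝ) :
    |qBar s qlim pbar εp Vp u - qBar s qlim pbar εp Vp w| ≤
      (pbar / εp) / √(1 / μ ^ 2 - 1) * |u - w| := by
  have hp : 0 ≤ pbar := by rw [hpbar]; positivity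
  calc _ ≤ |√(s ^ 2 - voltWatt pbar εp Vp u ^ 2) - √(s ^ 2 - voltWatt pbar εp Vp w ^ 2)| := by
        refine (abs_min_sub_min_le_max _ _ _ _).trans_eq ?_
        rw [sub_self, abs_zero, max_eq_right (abs_nonneg _)]
    _ ≤ pbar / √(s ^ 2 - pbar ^ 2) * |voltWatt pbar εp Vp u - voltWatt pbar εp Vp w| :=
        abs_sqrt_sq_sub_sq_sub_le hp (by rw [hpbar]; nlinarith) (abs_voltWatt_le Vp hp hε u)
          (abs_voltWatt_le Vp hp hε w)
    _ ≤ pbar / √(s ^ 2 - pbar ^ 2) * (pbar / εp * |u - w|) := by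
        gcongr
        exact abs_voltWatt_sub_voltWatt_le Vp hp hε u w
    _ = (pbar / εp) / √(1 / μ ^ 2 - 1) * |u - w| := by
        rw [hpbar, mul_div_sqrt_sq_sub_mul_sq hs hμ0]
        ring

lemma abs_mul_sub_mul_le_of_abs_sub_le {f g : ℝ → ℝ} {u w L K M N : ℝ}
    (hf : |f u - f w| ≤ L * |u - w|) (hg : |g u - g w| ≤ K * |u - w|)
    (hgu : |g u| ≤ N) (hfw : |f w| ≤ M) :
    |f u * g u - f w * g w| ≤ (L * N + M * K) * |u - w| :=
  calc _ = |(f u - f w) * g u + f w * (g u - g w)| := by ring_nf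
    _ ≤ |f u - f w| * |g u| + |f w| * |g u - g w| := by
        rw [← abs_mul, ← abs_mul]; exact abs_add_le _ _
    _ ≤ L * |u - w| * N + M * (K * |u - w|) :=
        add_le_add (mul_le_mul hf hgu (abs_nonneg _) ((abs_nonneg _).trans hf))
          (mul_le_mul hfw hg (abs_nonneg _) ((abs_nonneg _).trans hfw))
    _ = (L * N + M * K) * |u - w| := by ring

theorem middle_droop_segment_lipschitz_general (s μ εp Vp qlim pbar Vqp εqp : ℝ)
    (hs : 0 < s) (hμ0 : 0 < μ) (hμ1 : μ < 1) (hε : 0 < εp)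
    (hpbar : pbar = μ * s) (hq : 0 < qlim)
    (hεqp : 0 < εqp) :
    ∀ u ∈ Set.Icc (Vqp - εqp / 2) (Vqp + εqp / 2),
    ∀ w ∈ Set.Icc (Vqp - εqp / 2) (Vqp + εqp / 2),
      |qBar s qlim pbar εp Vp u * ((Vqp - εqp / 2) - u) / εqp -
        qBar s qlim pbar εp Vp w * ((Vqp - εqp / 2) - w) / εqp| ≤
      ((pbar / εp) / Real.sqrt (1 / μ ^ 2 - 1) + qlim / εqp) * |u - w| := by
  intro u ⟨hu₁, hu₂⟩ w _
  set droop : ℝ → ℝ := fun x ↦ ((Vqp - εqp / 2) - x) / εqp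
  have hdroop_sub : |droop u - droop w| ≤ 1 / εqp * |u - w| := by
    rw [← sub_div, abs_div, abs_of_pos hεqp, sub_sub_sub_cancel_left, abs_sub_comm]
    exact (one_div_mul_eq_div _ _).ge
  have hdroop_u : |droop u| ≤ 1 := by
    rw [abs_div, abs_of_pos hεqp, div_le_one hεqp, abs_le]
    constructor <;> linarith
  have hprod := abs_mul_sub_mul_le_of_abs_sub_le (f := qBar s qlim pbar εp Vp)
    (abs_qBar_sub_qBar_le hs hμ0 hμ1 hε hpbar u w) hdroop_sub hdroop_u (abs_qBar_le hq.le w)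
  simpa only [droop, ← mul_div_assoc, mul_one, mul_one_div] using hprod

theorem middle_droop_segment_lipschitz (s μ εp Vp qlim pbar Vqp εqp : ℝ)
    (hs : 0 < s) (hμ0 : 0 < μ) (hμ1 : μ < 1) (hε : 0 < εp) (hV : 0 < Vp - εp / 2)
    (hpbar : pbar = μ * s) (hq : 0 < qlim)
    (hVqp : 0 < Vqp) (hεqp : 0 < εqp) (hVqp' : 0 < Vqp - εqp / 2) :
    ∀ u ∈ Set.Icc (Vqp - εqp / 2) (Vqp + εqp / 2),
    ∀ w ∈ Set.Icc (Vqp - εqp / 2) (Vqp + εqp / 2),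
      |qBar s qlim pbar εp Vp u * ((Vqp - εqp / 2) - u) / εqp -
        qBar s qlim pbar εp Vp w * ((Vqp - εqp / 2) - w) / εqp| ≤
      ((pbar / εp) / Real.sqrt (1 / μ ^ 2 - 1) + qlim / εqp) * |u - w| :=
  middle_droop_segment_lipschitz_general s μ εp Vp qlim pbar Vqp εqp hs hμ0 hμ1 hε hpbar hq hεqp
end

section
/- Let B be an m×m real symmetric positive semidefinite matrix all of whose entries are nonnegative, and let D = diag(d_1, …, d_m) with all d_i ≥ 0. Then every eigenvalue λ of the product DB is real, nonnegative, and satisfies λ ≤ max_i (d_i · r_i(B)), where r_i(B) = Σ_j B_{ij} is the i-th row sum of B. In particular, if d_i · r_i(B) < 2 for every i, then every eigenvalue of DB is strictly less than 2. -/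
/-!
If `D B v = λ v` with `v ≠ 0`, put `w = B v` and `p = v* B v ≥ 0`. Then `w* D w = λ (w* v) = λ p`,
and `w* D w ≥ 0`. If `p > 0` this forces `λ` to be real and nonnegative; if `p = 0` then `w = 0`,
so `λ v = D w = 0` and `λ = 0`. The upper bound is Gershgorin's theorem: the entries of `D B`
are nonnegative, so every Gershgorin disc lies to the left of the row sum `d_k r_k(B)`.
-/

open Matrix Module.End
open scoped ComplexOrder

variable {n 𝕜 : Type*} [Fintype n] [RCLike 𝕜]

theorem Matrix.PosSemidef.map_ofReal {B : Matrix n n ℝ} (hB : B.PosSemidef) :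
    (B.map (algebraMap ℝ 𝕜)).PosSemidef := by
  classical
  open scoped MatrixOrder Matrix.Norms.L2Operator in
  obtain ⟨C, rfl⟩ := CStarAlgebra.nonneg_iff_eq_star_mul_self.mp hB.nonneg
  rw [star_eq_conjTranspose, Matrix.map_mul,
    conjTranspose_map _ fun a => (RCLike.conj_ofReal a).symm]
  exact posSemidef_conjTranspose_mul_self _

variable [DecidableEq n]

theorem Matrix.PosSemidef.nonneg_of_hasEigenvalue_mul {D B : Matrix n n 𝕜} (hD : D.PosSemidef)
    (hB : B.PosSemidef) {μ : 𝕜} (hμ : HasEigenvalue (toLin' (D * B)) μ) : 0 ≤ μ := by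
  obtain ⟨v, hv⟩ := hμ.exists_hasEigenvector
  have hDBv : D *ᵥ (B *ᵥ v) = μ • v := by
    rw [mulVec_mulVec, ← toLin'_apply]
    exact hv.apply_eq_smul
  set p := star v ⬝ᵥ (B *ᵥ v)
  have hp : 0 ≤ p := hB.dotProduct_mulVec_nonneg v
  have hμp : 0 ≤ μ * p := by
    have hpv : star (B *ᵥ v) ⬝ᵥ v = p := by
      rw [star_mulVec, ← dotProduct_mulVec, hB.isHermitian.eq]
    have := hD.dotProduct_mulVec_nonneg (B *ᵥ v)
    rwa [hDBv, dotProduct_smul, hpv, smul_eq_mul] at this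
  rcases hp.eq_or_lt with hp0 | hp_pos
  · have hBv : B *ᵥ v = 0 := (hB.dotProduct_mulVec_zero_iff v).mp hp0.symm
    rw [hBv, mulVec_zero, eq_comm, smul_eq_zero] at hDBv
    exact (hDBv.resolve_right hv.2).ge
  · calc 0 ≤ μ * p * p⁻¹ := mul_nonneg hμp (RCLike.inv_pos.mpr hp_pos).le
      _ = μ := mul_inv_cancel_right₀ hp_pos.ne' μ

theorem exists_re_le_sum_of_hasEigenvalue_map_ofReal {A : Matrix n n ℝ} (hA : ∀ i j, 0 ≤ A i j)
    {μ : 𝕜} (hμ : HasEigenvalue (toLin' (A.map (algebraMap ℝ 𝕜))) μ) :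
    ∃ k, RCLike.re μ ≤ ∑ j, A k j := by
  obtain ⟨k, hk⟩ := eigenvalue_mem_ball hμ
  have hoff : ∑ j ∈ Finset.univ.erase k, ‖A.map (algebraMap ℝ 𝕜) k j‖ =
      ∑ j ∈ Finset.univ.erase k, A k j := by
    simp [abs_of_nonneg (hA k _)]
  rw [Metric.mem_closedBall, dist_eq_norm, hoff, map_apply, RCLike.algebraMap_eq_ofReal] at hk
  have hre : RCLike.re μ - A k k ≤ ‖μ - A k k‖ := by
    simpa using RCLike.re_le_norm (μ - A k k)
  refine ⟨k, ?_⟩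
  rw [← Finset.add_sum_erase _ _ (Finset.mem_univ k)]
  linarith

theorem eigenvalues_of_diag_mul_psd_general (m : ℕ) (hm : 0 < m)
    (B : Matrix (Fin m) (Fin m) ℝ) (hBpsd : B.PosSemidef)
    (hBnn : ∀ i j, 0 ≤ B i j)
    (d : Fin m → ℝ) (hd : ∀ i, 0 ≤ d i)
    (lam : ℂ)
    (hlam : (((Matrix.diagonal d * B).map (algebraMap ℝ ℂ)).charpoly).IsRoot lam) :
    lam.im = 0 ∧ 0 ≤ lam.re ∧
      lam.re ≤ Finset.univ.sup'
        (⟨⟨0, hm⟩, Finset.mem_univ _⟩ : (Finset.univ : Finset (Fin m)).Nonempty)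
        (fun i => d i * ∑ j, B i j) ∧
      ((∀ i, d i * ∑ j, B i j < 2) → lam.re < 2) := by
  have hlam' : HasEigenvalue (toLin' ((diagonal d * B).map (algebraMap ℝ ℂ))) lam := by
    rwa [hasEigenvalue_iff_isRoot_charpoly, charpoly_toLin']
  have hnonneg : 0 ≤ lam := by
    rw [Matrix.map_mul, diagonal_map (map_zero _)] at hlam'
    exact (PosSemidef.diagonal fun i => by simpa using hd i).nonneg_of_hasEigenvalue_mul
      hBpsd.map_ofReal hlam'
  obtain ⟨k, hk⟩ := exists_re_le_sum_of_hasEigenvalue_map_ofReal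
    (fun i j => by simpa using mul_nonneg (hd i) (hBnn i j)) hlam'
  simp only [diagonal_mul, ← Finset.mul_sum, RCLike.re_to_complex] at hk
  have hsup := hk.trans (Finset.le_sup' (fun i => d i * ∑ j, B i j) (Finset.mem_univ k))
  exact ⟨(Complex.nonneg_iff.mp hnonneg).2.symm, (Complex.nonneg_iff.mp hnonneg).1, hsup,
    fun h2 => hsup.trans_lt ((Finset.sup'_lt_iff _).mpr fun i _ => h2 i)⟩

theorem eigenvalues_of_diag_mul_psd (m : ℕ) (hm : 0 < m)
    (B : Matrix (Fin m) (Fin m) ℝ) (hBsym : B.IsSymm) (hBpsd : B.PosSemidef)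
    (hBnn : ∀ i j, 0 ≤ B i j)
    (d : Fin m → ℝ) (hd : ∀ i, 0 ≤ d i)
    (lam : ℂ)
    (hlam : (((Matrix.diagonal d * B).map (algebraMap ℝ ℂ)).charpoly).IsRoot lam) :
    lam.im = 0 ∧ 0 ≤ lam.re ∧
      lam.re ≤ Finset.univ.sup'
        (⟨⟨0, hm⟩, Finset.mem_univ _⟩ : (Finset.univ : Finset (Fin m)).Nonempty)
        (fun i => d i * ∑ j, B i j) ∧
      ((∀ i, d i * ∑ j, B i j < 2) → lam.re < 2) :=
  eigenvalues_of_diag_mul_psd_general m hm B hBpsd hBnn d hd lam hlam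
end

section
/- Let m be a positive natural number and let M, T, F be m×m real matrices with M and (I − T·Fᵀ) invertible. Define R = 2·M⁻¹·diag(r)·(I − T·Fᵀ)⁻¹·T and X = 2·M⁻¹·diag(x)·(I − T·Fᵀ)⁻¹·T for vectors r, x ∈ ℝ^m. Suppose vectors P, Q, p, q, v² ∈ ℝ^m and a scalar v₀ satisfy the loss-free DistFlow relations P = T·p + T·Fᵀ·P, Q = T·q + T·Fᵀ·Q, and M·(v² − v₀²·𝟙) = 2·(diag(r)·P + diag(x)·Q), where 𝟙 is the all-ones vector. Then v² = v₀²·𝟙 + R·p + X·q. -/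
open Matrix

namespace Matrix

variable {n o α : Type*} [Fintype n] [DecidableEq n] [CommRing α]

theorem eq_inv_mulVec_of_mulVec_eq {A : Matrix n n α} (hA : IsUnit A.det) {u v : n → α}
    (h : A *ᵥ v = u) : v = A⁻¹ *ᵥ u := by
  rw [← h, mulVec_mulVec, nonsing_inv_mul A hA, one_mulVec]

theorem eq_inv_one_sub_mul_mulVec_of_eq_add_mulVec [Fintype o] {A : Matrix n n α}
    (hA : IsUnit (1 - A).det) {T : Matrix n o α} {p : o → α} {P : n → α}
    (h : P = T *ᵥ p + A *ᵥ P) : P = ((1 - A)⁻¹ * T) *ᵥ p := by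
  rw [← mulVec_mulVec]
  refine eq_inv_mulVec_of_mulVec_eq hA ?_
  rw [sub_mulVec, one_mulVec, sub_eq_iff_eq_add]
  exact h

end Matrix

theorem linearized_distflow_general (m : ℕ)
    (M T F : Matrix (Fin m) (Fin m) ℝ)
    (hM : IsUnit M.det) (hTF : IsUnit (1 - T * Fᵀ).det)
    (r x : Fin m → ℝ)
    (R X : Matrix (Fin m) (Fin m) ℝ)
    (hR : R = (2 : ℝ) • (M⁻¹ * Matrix.diagonal r * (1 - T * Fᵀ)⁻¹ * T))
    (hX : X = (2 : ℝ) • (M⁻¹ * Matrix.diagonal x * (1 - T * Fᵀ)⁻¹ * T))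
    (P Q p q v2 : Fin m → ℝ) (v0 : ℝ)
    (hP : P = T.mulVec p + (T * Fᵀ).mulVec P)
    (hQ : Q = T.mulVec q + (T * Fᵀ).mulVec Q)
    (hv : M.mulVec (v2 - fun _ => v0 ^ 2) =
      (2 : ℝ) • ((Matrix.diagonal r).mulVec P + (Matrix.diagonal x).mulVec Q)) :
    v2 = (fun _ => v0 ^ 2) + R.mulVec p + X.mulVec q := by
  have hP' := eq_inv_one_sub_mul_mulVec_of_eq_add_mulVec hTF hP
  have hQ' := eq_inv_one_sub_mul_mulVec_of_eq_add_mulVec hTF hQ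
  rw [add_assoc, ← sub_eq_iff_eq_add', eq_inv_mulVec_of_mulVec_eq hM hv, hR, hX, hP', hQ']
  simp only [smul_mulVec, mulVec_add, mulVec_smul, ← mulVec_mulVec, smul_add]

theorem linearized_distflow (m : ℕ) (hm : 0 < m)
    (M T F : Matrix (Fin m) (Fin m) ℝ)
    (hM : IsUnit M.det) (hTF : IsUnit (1 - T * Fᵀ).det)
    (r x : Fin m → ℝ)
    (R X : Matrix (Fin m) (Fin m) ℝ)
    (hR : R = (2 : ℝ) • (M⁻¹ * Matrix.diagonal r * (1 - T * Fᵀ)⁻¹ * T))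
    (hX : X = (2 : ℝ) • (M⁻¹ * Matrix.diagonal x * (1 - T * Fᵀ)⁻¹ * T))
    (P Q p q v2 : Fin m → ℝ) (v0 : ℝ)
    (hP : P = T.mulVec p + (T * Fᵀ).mulVec P)
    (hQ : Q = T.mulVec q + (T * Fᵀ).mulVec Q)
    (hv : M.mulVec (v2 - fun _ => v0 ^ 2) =
      (2 : ℝ) • ((Matrix.diagonal r).mulVec P + (Matrix.diagonal x).mulVec Q)) :
    v2 = (fun _ => v0 ^ 2) + R.mulVec p + X.mulVec q :=
  linearized_distflow_general m M T F hM hTF r x R X hR hX P Q p q v2 v0 hP hQ hv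
end
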